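/- arXiv:2410.11930 — 3 statements merged into one kernel-verified Lean document; each statement's English description precedes it below -/
import Mathlib

section
/- Let {G_i}_{i∈I} be a family of ℓ-groups, each of which is a Martínez ℓ-group. Then the direct sum ⊕_{i∈I} G_i (the ℓ-subgroup of the direct product consisting of elements with finite support, with coordinatewise operations and order) is a Martínez ℓ-group. -/
/-!
Common definitions for lattice-ordered groups (ℓ-groups), written additively.
An ℓ-group is modeled as `[Lattice G] [AddGroup G]` together with the two
`CovariantClass` hypotheses expressing that translation is order-preserving.
-/

/-- The absolute value in an ℓ-group: `|g| = (g ⊔ 0) + ((-g) ⊔ 0)`. -/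
def labs {G : Type*} [Lattice G] [AddGroup G] (g : G) : G := (g ⊔ 0) + (-g ⊔ 0)

/-- A convex ℓ-subgroup of `G`: a subgroup which is a sublattice and is convex. -/
def IsConvexLSubgroup {G : Type*} [Lattice G] [AddGroup G] (H : Set G) : Prop :=
  (0 : G) ∈ H ∧ (∀ a ∈ H, -a ∈ H) ∧ (∀ a ∈ H, ∀ b ∈ H, a + b ∈ H) ∧
  (∀ a ∈ H, ∀ b ∈ H, a ⊔ b ∈ H) ∧ (∀ a ∈ H, ∀ b ∈ H, a ⊓ b ∈ H) ∧
  (∀ a ∈ H, ∀ b ∈ H, ∀ g : G, a ≤ g → g ≤ b → g ∈ H)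

/-- The polar `g^⊥ = {h : |h| ⊓ |g| = 0}`. -/
def polar {G : Type*} [Lattice G] [AddGroup G] (g : G) : Set G :=
  {h : G | labs h ⊓ labs g = 0}

/-- The double polar `g^{⊥⊥} = (g^⊥)^⊥ = {h : ∀ k ∈ g^⊥, |h| ⊓ |k| = 0}`. -/
def biPolar {G : Type*} [Lattice G] [AddGroup G] (g : G) : Set G :=
  {h : G | ∀ k ∈ polar g, labs h ⊓ labs k = 0}

/-- A d-subgroup: a convex ℓ-subgroup containing the double polar of each of its elements. -/
def IsDSubgroup {G : Type*} [Lattice G] [AddGroup G] (H : Set G) : Prop :=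
  IsConvexLSubgroup H ∧ ∀ h ∈ H, biPolar h ⊆ H

/-- A Martínez ℓ-group: every convex ℓ-subgroup is a d-subgroup. -/
def Martinez (G : Type*) [Lattice G] [AddGroup G] : Prop :=
  ∀ H : Set G, IsConvexLSubgroup H → IsDSubgroup H

/-- `G(g)`, the smallest convex ℓ-subgroup of `G` containing `g`. -/
def principalCLS {G : Type*} [Lattice G] [AddGroup G] (g : G) : Set G :=
  {x : G | ∀ H : Set G, IsConvexLSubgroup H → g ∈ H → x ∈ H}

/-- An ℓ-subgroup of `G`: a subgroup that is also a sublattice. -/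
def IsLSubgroup {G : Type*} [Lattice G] [AddGroup G] (H : Set G) : Prop :=
  (0 : G) ∈ H ∧ (∀ a ∈ H, -a ∈ H) ∧ (∀ a ∈ H, ∀ b ∈ H, a + b ∈ H) ∧
  (∀ a ∈ H, ∀ b ∈ H, a ⊔ b ∈ H) ∧ (∀ a ∈ H, ∀ b ∈ H, a ⊓ b ∈ H)

/-- `K` is a convex ℓ-subgroup of the ℓ-group `H` (an ℓ-subgroup of `G`),
with convexity relative to `H`. -/
def IsConvexLSubgroupIn {G : Type*} [Lattice G] [AddGroup G] (H K : Set G) : Prop :=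
  K ⊆ H ∧ (0 : G) ∈ K ∧ (∀ a ∈ K, -a ∈ K) ∧ (∀ a ∈ K, ∀ b ∈ K, a + b ∈ K) ∧
  (∀ a ∈ K, ∀ b ∈ K, a ⊔ b ∈ K) ∧ (∀ a ∈ K, ∀ b ∈ K, a ⊓ b ∈ K) ∧
  (∀ a ∈ K, ∀ b ∈ K, ∀ g ∈ H, a ≤ g → g ≤ b → g ∈ K)

/-- The polar of `g` computed inside the ℓ-subgroup `H` of `G`. -/
def polarIn {G : Type*} [Lattice G] [AddGroup G] (H : Set G) (g : G) : Set G :=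
  {h ∈ H | labs h ⊓ labs g = 0}

/-- The double polar of `g` computed inside the ℓ-subgroup `H` of `G`. -/
def biPolarIn {G : Type*} [Lattice G] [AddGroup G] (H : Set G) (g : G) : Set G :=
  {h ∈ H | ∀ k ∈ polarIn H g, labs h ⊓ labs k = 0}

/-- The ℓ-subgroup `H` of `G`, regarded as an ℓ-group in its own right, is a
Martínez ℓ-group: every convex ℓ-subgroup of `H` is a d-subgroup of `H`. -/
def MartinezIn {G : Type*} [Lattice G] [AddGroup G] (H : Set G) : Prop :=
  ∀ K : Set G, IsConvexLSubgroupIn H K → ∀ h ∈ K, biPolarIn H h ⊆ K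


section auxlemmas
variable {L : Type*} [Lattice L] [AddGroup L]
  [CovariantClass L L (· + ·) (· ≤ ·)] [CovariantClass L L (Function.swap (· + ·)) (· ≤ ·)]

theorem labs_nonneg' (a : L) : 0 ≤ labs a :=
  add_nonneg le_sup_right le_sup_right

theorem le_labs' (a : L) : a ≤ labs a :=
  le_sup_left.trans (le_add_of_nonneg_right le_sup_right)

theorem neg_le_labs' (a : L) : -a ≤ labs a :=
  le_sup_left.trans (le_add_of_nonneg_left le_sup_right)

theorem neg_labs_le' (a : L) : -labs a ≤ a :=
  neg_le.mp (neg_le_labs' a)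

theorem labs_zero' : labs (0 : L) = 0 := by simp [labs]

end auxlemmas

/-- a direct sum of Martínez ℓ-groups (the ℓ-subgroup of the
direct product consisting of the finitely supported elements) is Martínez. -/
theorem stmt_10 {I : Type*} (G : I → Type*)
    [∀ i, Lattice (G i)] [∀ i, AddGroup (G i)]
    [∀ i, CovariantClass (G i) (G i) (· + ·) (· ≤ ·)]
    [∀ i, CovariantClass (G i) (G i) (Function.swap (· + ·)) (· ≤ ·)]
    (hM : ∀ i, Martinez (G i)) :
    MartinezIn {f : ∀ i, G i | {i : I | f i ≠ 0}.Finite} := by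
  classical
  set H : Set (∀ i, G i) := {f : ∀ i, G i | {i : I | f i ≠ 0}.Finite} with hH
  intro K hK h hh g hg
  obtain ⟨hKH, hK0, hKneg, hKadd, hKsup, hKinf, hKconv⟩ := hK
  obtain ⟨hgH, hgpol⟩ := hg
  -- basic facts about Pi.single
  have habs_apply : ∀ (f : ∀ i, G i) (i : I), labs f i = labs (f i) := fun f i => rfl
  have hsingle_mem : ∀ (i : I) (x : G i), Pi.single i x ∈ H := by
    intro i x
    refine Set.Finite.subset (Set.finite_singleton i) ?_
    intro j hj
    by_contra hji
    exact hj (Pi.single_eq_of_ne (by simpa using hji) x)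
  have hsingle_labs : ∀ (i : I) (x : G i), labs (Pi.single i x) = Pi.single i (labs x) := by
    intro i x
    funext j
    by_cases hji : j = i
    · subst hji; simp [habs_apply]
    · rw [habs_apply, Pi.single_eq_of_ne hji, Pi.single_eq_of_ne hji, labs_zero']
  -- |h| ∈ K
  have hlabsh : labs h ∈ K := by
    have h1 : h ⊔ 0 ∈ K := hKsup h hh 0 hK0
    have h2 : (-h) ⊔ 0 ∈ K := hKsup (-h) (hKneg h hh) 0 hK0
    exact hKadd _ h1 _ h2
  -- each coordinate of h generates: Pi.single i (h i) ∈ K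
  have hsingle_h : ∀ i : I, Pi.single i (h i) ∈ K := by
    intro i
    have hs1 : Pi.single i (labs (h i)) ∈ K := by
      refine hKconv 0 hK0 (labs h) hlabsh _ (hsingle_mem i _) ?_ ?_
      · intro j
        by_cases hji : j = i
        · subst hji; simpa using labs_nonneg' (h j)
        · simp [Pi.single_eq_of_ne hji]
      · intro j
        by_cases hji : j = i
        · subst hji; simp [habs_apply]
        · rw [Pi.single_eq_of_ne hji, habs_apply]; exact labs_nonneg' (h j)
    refine hKconv (-(Pi.single i (labs (h i)))) (hKneg _ hs1) (Pi.single i (labs (h i))) hs1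
      _ (hsingle_mem i _) ?_ ?_
    · intro j
      by_cases hji : j = i
      · subst hji; simpa using neg_labs_le' (h j)
      · simp [Pi.single_eq_of_ne hji]
    · intro j
      by_cases hji : j = i
      · subst hji; simpa using le_labs' (h j)
      · simp [Pi.single_eq_of_ne hji]
  -- the coordinate subgroup K_i
  have hKi : ∀ i : I, IsConvexLSubgroup {x : G i | Pi.single i x ∈ K} := by
    intro i
    refine ⟨by simpa using hK0, ?_, ?_, ?_, ?_, ?_⟩
    · intro a ha
      have : Pi.single i (-a) = -(Pi.single i a) := by
        funext j
        by_cases hji : j = i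
        · subst hji; simp
        · simp [Pi.single_eq_of_ne hji]
      simpa [Set.mem_setOf_eq, this] using hKneg _ ha
    · intro a ha b hb
      have : Pi.single i (a + b) = Pi.single i a + Pi.single i b := by
        funext j
        by_cases hji : j = i
        · subst hji; simp
        · simp [Pi.single_eq_of_ne hji]
      simpa [Set.mem_setOf_eq, this] using hKadd _ ha _ hb
    · intro a ha b hb
      have : Pi.single i (a ⊔ b) = Pi.single i a ⊔ Pi.single i b := by
        funext j
        by_cases hji : j = i
        · subst hji; simp
        · simp [Pi.single_eq_of_ne hji]
      simpa [Set.mem_setOf_eq, this] using hKsup _ ha _ hb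
    · intro a ha b hb
      have : Pi.single i (a ⊓ b) = Pi.single i a ⊓ Pi.single i b := by
        funext j
        by_cases hji : j = i
        · subst hji; simp
        · simp [Pi.single_eq_of_ne hji]
      simpa [Set.mem_setOf_eq, this] using hKinf _ ha _ hb
    · intro a ha b hb x hax hxb
      refine hKconv _ ha _ hb _ (hsingle_mem i x) ?_ ?_
      · intro j
        by_cases hji : j = i
        · subst hji; simpa using hax
        · simp [Pi.single_eq_of_ne hji]
      · intro j
        by_cases hji : j = i
        · subst hji; simpa using hxb
        · simp [Pi.single_eq_of_ne hji]
  -- g i ∈ biPolar (h i)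
  have hgbi : ∀ i : I, g i ∈ biPolar (h i) := by
    intro i k hk
    have hks : Pi.single i k ∈ polarIn H h := by
      refine ⟨hsingle_mem i k, ?_⟩
      funext j
      by_cases hji : j = i
      · subst hji
        show labs (Pi.single j k) j ⊓ labs h j = (0 : ∀ i, G i) j
        rw [hsingle_labs, Pi.single_eq_same, habs_apply]
        exact hk
      · show labs (Pi.single i k) j ⊓ labs h j = (0 : ∀ i, G i) j
        rw [hsingle_labs, Pi.single_eq_of_ne hji, habs_apply]
        exact inf_eq_left.mpr (labs_nonneg' (h j))
    have := congrFun (hgpol _ hks) i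
    simpa [habs_apply, hsingle_labs] using this
  -- g i ∈ K_i by Martinez
  have hgK : ∀ i : I, Pi.single i (g i) ∈ K := by
    intro i
    exact ((hM i _ (hKi i)).2 (h i) (hsingle_h i)) (hgbi i)
  -- g is a finite sum of singles: induct on support
  have key : ∀ (s : Finset I) (f : ∀ i, G i), f ∈ H → (∀ i, Pi.single i (f i) ∈ K) →
      {i : I | f i ≠ 0} ⊆ ↑s → f ∈ K := by
    intro s
    induction s using Finset.induction with
    | empty =>
      intro f _ _ hsupp
      have : f = 0 := by
        funext j
        by_contra hj
        exact absurd (hsupp hj) (by simp)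
      rwa [this]
    | @insert a s' ha ih =>
      intro f hfH hfK hsupp
      set f' : ∀ i, G i := Function.update f a 0 with hf'
      have hdecomp : f = Pi.single a (f a) + f' := by
        funext j
        by_cases hja : j = a
        · subst hja; simp [hf']
        · simp [hf', Pi.single_eq_of_ne hja, Function.update_of_ne hja]
      have hf'H : f' ∈ H := by
        refine Set.Finite.subset hfH ?_
        intro j hj
        by_cases hja : j = a
        · subst hja; simp [hf'] at hj
        · simpa [hf', Function.update_of_ne hja] using hj
      have hf'K : ∀ i, Pi.single i (f' i) ∈ K := by
        intro i
        by_cases hia : i = a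
        · subst hia; simp [hf']; exact hK0
        · simpa [hf', Function.update_of_ne hia] using hfK i
      have hf'supp : {i : I | f' i ≠ 0} ⊆ ↑s' := by
        intro j hj
        by_cases hja : j = a
        · subst hja; simp [hf'] at hj
        · have := hsupp (show f j ≠ 0 by simpa [hf', Function.update_of_ne hja] using hj)
          simp at this
          rcases this with h1 | h1
          · exact absurd h1 hja
          · exact h1
      rw [hdecomp]
      exact hKadd _ (hfK a) _ (ih f' hf'H hf'K hf'supp)
  exact key hgH.toFinset g hgH hgK (by simp)
end

section
/- Let {G_i}_{i∈I} be a family of nontrivial ℓ-groups with I infinite, each G_i a Martínez ℓ-group. Then the direct product ∏_{i∈I} G_i (with coordinatewise operations and order) is not a Martínez ℓ-group. -/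
section Helpers

variable {G : Type*} [Lattice G] [AddGroup G]
  [CovariantClass G G (· + ·) (· ≤ ·)]
  [CovariantClass G G (Function.swap (· + ·)) (· ≤ ·)]

theorem labs_eq_abs (g : G) : labs g = |g| := posPart_add_negPart g

theorem labs_nonneg (g : G) : 0 ≤ labs g := by rw [labs_eq_abs]; exact abs_nonneg g

theorem labs_eq_zero_iff {g : G} : labs g = 0 ↔ g = 0 := by
  rw [labs_eq_abs]
  constructor
  · intro h
    have h1 : g ≤ 0 := (le_abs_self g).trans h.le
    have h2 : -g ≤ 0 := (neg_le_abs g).trans h.le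
    have h3 : 0 ≤ g := by simpa using neg_le_neg_iff.mpr h2
    exact le_antisymm h1 h3
  · rintro rfl; simp [abs]

theorem labs_of_nonneg {g : G} (hg : 0 ≤ g) : labs g = g := by
  rw [labs_eq_abs]
  exact sup_eq_left.mpr ((neg_nonpos.mpr hg).trans hg)

theorem nsmul_nonneg' {a : G} (ha : 0 ≤ a) (n : ℕ) : 0 ≤ n • a := by
  induction n with
  | zero => simp
  | succ n ih => rw [succ_nsmul]; calc (0:G) = 0 + 0 := by simp
                                      _ ≤ n • a + a := add_le_add ih ha

/-- If `a ⊓ b = 0` with `a, b ≥ 0`, then `(n • a) ⊓ b = 0`. -/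
theorem nsmul_inf_eq_zero {a b : G} (ha : 0 ≤ a) (hb : 0 ≤ b) (hab : a ⊓ b = 0) (n : ℕ) :
    (n • a) ⊓ b = 0 := by
  induction n with
  | zero => simpa using hb
  | succ n ih =>
    have h0 : 0 ≤ (n + 1) • a ⊓ b := le_inf (nsmul_nonneg' ha (n + 1)) hb
    refine le_antisymm ?_ h0
    have h1 : (n + 1) • a ⊓ b ≤ (n • a + a) ⊓ (n • a + b) ⊓ b := by
      rw [succ_nsmul]
      refine le_inf (le_inf inf_le_left ?_) inf_le_right
      have : b ≤ n • a + b := by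
        calc b = 0 + b := by simp
        _ ≤ n • a + b := add_le_add_left (nsmul_nonneg' ha n) b
      exact inf_le_right.trans this
    have h2 : (n • a + a) ⊓ (n • a + b) = n • a := by
      rw [← add_inf, hab, add_zero]
    rw [h2] at h1
    rw [ih] at h1
    exact h1

end Helpers

/-- an infinite direct product of nontrivial Martínez ℓ-groups is
not Martínez. -/
theorem stmt_11 {I : Type*} [Infinite I] (G : I → Type*)
    [∀ i, Lattice (G i)] [∀ i, AddGroup (G i)]
    [∀ i, CovariantClass (G i) (G i) (· + ·) (· ≤ ·)]
    [∀ i, CovariantClass (G i) (G i) (Function.swap (· + ·)) (· ≤ ·)]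
    (hnt : ∀ i, ∃ x : G i, x ≠ 0) (hM : ∀ i, Martinez (G i)) :
    ¬ Martinez (∀ i, G i) := by
  classical
  haveI : CovariantClass (∀ i, G i) (∀ i, G i) (· + ·) (· ≤ ·) :=
    ⟨fun f _ _ hle i => add_le_add_right (hle i) (f i)⟩
  haveI : CovariantClass (∀ i, G i) (∀ i, G i) (Function.swap (· + ·)) (· ≤ ·) :=
    ⟨fun f _ _ hle i => add_le_add_left (hle i) (f i)⟩
  -- pick nonzero elements, set a i = |e i| > 0
  set a : ∀ i, G i := fun i => labs (hnt i).choose with ha_def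
  have ha_pos : ∀ i, 0 ≤ a i := fun i => labs_nonneg _
  have ha_ne : ∀ i, a i ≠ 0 := fun i => fun h => (hnt i).choose_spec (labs_eq_zero_iff.mp h)
  set h : ∀ i, G i := a with hh_def
  have hh_nonneg : (0 : ∀ i, G i) ≤ h := fun i => ha_pos i
  -- pointwise computations
  have labs_apply : ∀ (x : ∀ i, G i) (i : I), labs x i = labs (x i) := fun x i => rfl
  have nsmul_apply : ∀ (n : ℕ) (x : ∀ i, G i) (i : I), (n • x) i = n • (x i) := fun n x i => rfl
  -- the convex ℓ-subgroup H
  set H : Set (∀ i, G i) := {x | ∃ n : ℕ, labs x ≤ n • h} with hH_def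
  have habs_le : ∀ x : ∀ i, G i, ∀ b, labs x ≤ b ↔ x ≤ b ∧ -x ≤ b := by
    intro x b
    rw [labs_eq_abs]
    exact abs_le'
  have hconv : IsConvexLSubgroup H := by
    refine ⟨⟨0, ?_⟩, ?_, ?_, ?_, ?_, ?_⟩
    · rw [labs_eq_zero_iff.mpr rfl]; simp
    · rintro x ⟨n, hn⟩
      exact ⟨n, by rwa [labs_eq_abs, abs_neg, ← labs_eq_abs]⟩
    · rintro x ⟨n, hn⟩ y ⟨m, hm⟩
      obtain ⟨hx1, hx2⟩ := (habs_le x _).mp hn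
      obtain ⟨hy1, hy2⟩ := (habs_le y _).mp hm
      refine ⟨n + m, (habs_le _ _).mpr ⟨?_, ?_⟩⟩
      · calc x + y ≤ n • h + m • h := add_le_add hx1 hy1
          _ = (n + m) • h := (add_nsmul h n m).symm
      · calc -(x + y) = -y + -x := neg_add_rev x y
          _ ≤ m • h + n • h := add_le_add hy2 hx2
          _ = (m + n) • h := (add_nsmul h m n).symm
          _ = (n + m) • h := by rw [Nat.add_comm]
    · rintro x ⟨n, hn⟩ y ⟨m, hm⟩
      obtain ⟨hx1, hx2⟩ := (habs_le x _).mp hn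
      obtain ⟨hy1, hy2⟩ := (habs_le y _).mp hm
      have hnm : n • h ≤ (n + m) • h := by
        rw [add_nsmul]
        calc n • h = n • h + 0 := by simp
          _ ≤ n • h + m • h := add_le_add_right (nsmul_nonneg' hh_nonneg m) _
      have hmn : m • h ≤ (n + m) • h := by
        rw [add_nsmul]
        calc m • h = 0 + m • h := by simp
          _ ≤ n • h + m • h := add_le_add_left (nsmul_nonneg' hh_nonneg n) _
      refine ⟨n + m, (habs_le _ _).mpr ⟨sup_le (hx1.trans hnm) (hy1.trans hmn), ?_⟩⟩
      · rw [neg_sup]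
        exact inf_le_left.trans (hx2.trans hnm)
    · rintro x ⟨n, hn⟩ y ⟨m, hm⟩
      obtain ⟨hx1, hx2⟩ := (habs_le x _).mp hn
      obtain ⟨hy1, hy2⟩ := (habs_le y _).mp hm
      have hnm : n • h ≤ (n + m) • h := by
        rw [add_nsmul]
        calc n • h = n • h + 0 := by simp
          _ ≤ n • h + m • h := add_le_add_right (nsmul_nonneg' hh_nonneg m) _
      have hmn : m • h ≤ (n + m) • h := by
        rw [add_nsmul]
        calc m • h = 0 + m • h := by simp
          _ ≤ n • h + m • h := add_le_add_left (nsmul_nonneg' hh_nonneg n) _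
      refine ⟨n + m, (habs_le _ _).mpr ⟨inf_le_left.trans (hx1.trans hnm), ?_⟩⟩
      · rw [neg_inf]
        exact sup_le (hx2.trans hnm) (hy2.trans hmn)
    · rintro x ⟨n, hn⟩ y ⟨m, hm⟩ g hxg hgy
      obtain ⟨hx1, hx2⟩ := (habs_le x _).mp hn
      obtain ⟨hy1, hy2⟩ := (habs_le y _).mp hm
      have hnm : n • h ≤ (n + m) • h := by
        rw [add_nsmul]
        calc n • h = n • h + 0 := by simp
          _ ≤ n • h + m • h := add_le_add_right (nsmul_nonneg' hh_nonneg m) _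
      have hmn : m • h ≤ (n + m) • h := by
        rw [add_nsmul]
        calc m • h = 0 + m • h := by simp
          _ ≤ n • h + m • h := add_le_add_left (nsmul_nonneg' hh_nonneg n) _
      exact ⟨n + m, (habs_le _ _).mpr ⟨hgy.trans (hy1.trans hmn),
        (neg_le_neg_iff.mpr hxg).trans (hx2.trans hnm)⟩⟩
  have hh_mem : h ∈ H := by
    refine ⟨1, ?_⟩
    have : labs h = h := funext fun i => labs_of_nonneg (ha_pos i)
    rw [this, one_nsmul]
  -- the unbounded witness
  let f : ℕ ↪ I := Infinite.natEmbedding I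
  let idx : I → ℕ := fun i => if hi : ∃ n, f n = i then hi.choose else 0
  have idx_spec : ∀ n : ℕ, idx (f n) = n := by
    intro n
    have hi : ∃ m, f m = f n := ⟨n, rfl⟩
    simp only [idx, dif_pos hi]
    exact f.injective hi.choose_spec
  set x : ∀ i, G i := fun i => (idx i) • a i with hx_def
  have hx_abs : ∀ i, labs (x i) = (idx i) • a i :=
    fun i => labs_of_nonneg (nsmul_nonneg' (ha_pos i) _)
  -- x is in the double polar of h
  have hx_bip : x ∈ biPolar h := by
    intro k hk
    funext i
    have hki : labs (k i) ⊓ labs (h i) = 0 := congrFun hk i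
    have hhi : labs (h i) = a i := labs_of_nonneg (ha_pos i)
    rw [hhi] at hki
    show labs (x i) ⊓ labs (k i) = 0
    rw [hx_abs i]
    have := nsmul_inf_eq_zero (ha_pos i) (labs_nonneg (k i)) (by rwa [inf_comm]) (idx i)
    rwa [inf_comm] at this ⊢
  -- but x is not in H
  have hx_not : x ∉ H := by
    rintro ⟨n, hn⟩
    have hni : labs (x (f (n + 1))) ≤ n • (h (f (n + 1))) := hn (f (n + 1))
    rw [hx_abs, idx_spec] at hni
    have : (n + 1) • a (f (n + 1)) ≤ n • a (f (n + 1)) := hni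
    rw [succ_nsmul] at this
    have h2 : a (f (n + 1)) ≤ 0 := by
      have := le_of_add_le_add_left (a := n • a (f (n+1))) (by simpa using this)
      simpa using this
    exact ha_ne (f (n + 1)) (le_antisymm h2 (ha_pos (f (n + 1))))
  intro hMart
  exact hx_not ((hMart H hconv).2 h hh_mem hx_bip)
end

section
/- Let G be an abelian ℓ-group, let 𝓟 be a nonempty set of prime subgroups of G with ⋂𝓟 = {0}, and let Q be a prime subgroup of G. For g ∈ G write V_𝓟(g) = {P ∈ 𝓟 : g ∈ P}. Then the following are equivalent: (i) Q is a 𝓟-element, i.e., whenever h ∈ Q, g ∈ G, and V_𝓟(h) ⊆ V_𝓟(g), then g ∈ Q; (ii) for every q ∈ Q, ⋂V_𝓟(q) ⊆ Q (the intersection of all members of V_𝓟(q)); (iii) Q belongs to the closure of 𝓟 in Spec(G) with respect to the patch topology. -/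
/-- A prime subgroup: a proper convex ℓ-subgroup `P` with `a ⊓ b ∈ P → a ∈ P ∨ b ∈ P`. -/
def IsPrimeSubgroup {G : Type*} [Lattice G] [AddGroup G] (P : Set G) : Prop :=
  IsConvexLSubgroup P ∧ P ≠ Set.univ ∧ ∀ a b : G, a ⊓ b ∈ P → a ∈ P ∨ b ∈ P

/-- A minimal prime subgroup. -/
def IsMinimalPrimeLSubgroup {G : Type*} [Lattice G] [AddGroup G] (P : Set G) : Prop :=
  IsPrimeSubgroup P ∧ ∀ Q : Set G, IsPrimeSubgroup Q → Q ⊆ P → Q = P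

/-- `Spec(G)`, the set of prime subgroups of `G`, as a type. -/
abbrev SpecType (G : Type*) [Lattice G] [AddGroup G] : Type _ :=
  {P : Set G // IsPrimeSubgroup P}

/-- `U(g) = {P ∈ Spec(G) : g ∉ P}`. -/
def Uset {G : Type*} [Lattice G] [AddGroup G] (g : G) : Set (SpecType G) :=
  {P : SpecType G | g ∉ P.1}

/-- `V(g) = {P ∈ Spec(G) : g ∈ P}`. -/
def Vset {G : Type*} [Lattice G] [AddGroup G] (g : G) : Set (SpecType G) :=
  {P : SpecType G | g ∈ P.1}

/-- The patch topology on `Spec(G)`, generated by all the sets `U(g)` and `V(g)`. -/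
def patchTop (G : Type*) [Lattice G] [AddGroup G] : TopologicalSpace (SpecType G) :=
  TopologicalSpace.generateFrom
    ({S : Set (SpecType G) | ∃ g : G, S = Uset g} ∪
      {S : Set (SpecType G) | ∃ g : G, S = Vset g})

/-- The hull-kernel topology on `Spec(G)`, with base `{U(g) : g ∈ G}`. -/
def hkTop (G : Type*) [Lattice G] [AddGroup G] : TopologicalSpace (SpecType G) :=
  TopologicalSpace.generateFrom {S : Set (SpecType G) | ∃ g : G, S = Uset g}

section Aux

variable {G : Type*} [Lattice G] [AddCommGroup G]
  [CovariantClass G G (· + ·) (· ≤ ·)]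
  [CovariantClass G G (Function.swap (· + ·)) (· ≤ ·)]

lemma aux_labs_nonneg (g : G) : (0 : G) ≤ labs g := by
  have h1 : (0 : G) ≤ g ⊔ 0 := le_sup_right
  have h2 : (0 : G) ≤ -g ⊔ 0 := le_sup_right
  calc (0 : G) = 0 + 0 := by rw [add_zero]
    _ ≤ (g ⊔ 0) + (-g ⊔ 0) := add_le_add h1 h2

lemma aux_le_labs (g : G) : g ≤ labs g := by
  calc g ≤ g ⊔ 0 := le_sup_left
    _ = (g ⊔ 0) + 0 := by rw [add_zero]
    _ ≤ (g ⊔ 0) + (-g ⊔ 0) := add_le_add_right le_sup_right _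

lemma aux_neg_labs_le (g : G) : -labs g ≤ g := by
  have h : -g ≤ labs g := by
    calc -g ≤ -g ⊔ 0 := le_sup_left
      _ = 0 + (-g ⊔ 0) := by rw [zero_add]
      _ ≤ (g ⊔ 0) + (-g ⊔ 0) := add_le_add_left le_sup_right _
  have h2 : (0 : G) ≤ g + labs g := by
    calc (0 : G) = g + -g := (add_neg_cancel g).symm
      _ ≤ g + labs g := add_le_add_right h g
  have h3 := add_le_add_right h2 (-labs g)
  simpa using h3

lemma aux_labs_mem {H : Set G} (hH : IsConvexLSubgroup H) {x : G} (hx : x ∈ H) :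
    labs x ∈ H := by
  obtain ⟨h0, hneg, hadd, hsup, -, -⟩ := hH
  exact hadd _ (hsup _ hx _ h0) _ (hsup _ (hneg _ hx) _ h0)

lemma aux_mem_of_labs_mem {H : Set G} (hH : IsConvexLSubgroup H) {x : G}
    (hx : labs x ∈ H) : x ∈ H := by
  obtain ⟨-, hneg, -, -, -, hconv⟩ := hH
  exact hconv _ (hneg _ hx) _ hx x (aux_neg_labs_le x) (aux_le_labs x)

/-- Key lemma: every patch-open set containing a prime `Q` contains a basic
`U(a) ∩ V(b)` neighbourhood of `Q`. -/
lemma aux_key (Q : Set G) (hQ : IsPrimeSubgroup Q) {o : Set (SpecType G)}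
    (ho : TopologicalSpace.GenerateOpen
      ({S : Set (SpecType G) | ∃ g : G, S = Uset g} ∪
        {S : Set (SpecType G) | ∃ g : G, S = Vset g}) o) :
    (⟨Q, hQ⟩ : SpecType G) ∈ o →
      ∃ a b : G, a ∉ Q ∧ b ∈ Q ∧ ∀ P : SpecType G, a ∉ P.1 → b ∈ P.1 → P ∈ o := by
  obtain ⟨aQ, haQ⟩ := (Set.ne_univ_iff_exists_notMem Q).mp hQ.2.1
  induction ho with
  | basic S hS =>
      intro hmem
      rcases hS with ⟨g, rfl⟩ | ⟨g, rfl⟩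
      · exact ⟨g, 0, hmem, hQ.1.1, fun P hP _ => hP⟩
      · exact ⟨aQ, g, haQ, hmem, fun P _ hb => hb⟩
  | univ =>
      intro _
      exact ⟨aQ, 0, haQ, hQ.1.1, fun _ _ _ => trivial⟩
  | inter o1 o2 _ _ ih1 ih2 =>
      intro hmem
      obtain ⟨a₁, b₁, ha₁, hb₁, h1⟩ := ih1 hmem.1
      obtain ⟨a₂, b₂, ha₂, hb₂, h2⟩ := ih2 hmem.2
      refine ⟨labs a₁ ⊓ labs a₂, labs b₁ ⊔ labs b₂, ?_, ?_, ?_⟩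
      · intro hin
        rcases hQ.2.2 _ _ hin with h | h
        · exact ha₁ (aux_mem_of_labs_mem hQ.1 h)
        · exact ha₂ (aux_mem_of_labs_mem hQ.1 h)
      · exact hQ.1.2.2.2.1 _ (aux_labs_mem hQ.1 hb₁) _ (aux_labs_mem hQ.1 hb₂)
      · intro P haP hbP
        obtain ⟨p0, pneg, padd, psup, pinf, pconv⟩ := P.2.1
        have hlow : (0 : G) ≤ labs a₁ ⊓ labs a₂ :=
          le_inf (aux_labs_nonneg _) (aux_labs_nonneg _)
        have ha₁P : a₁ ∉ P.1 := fun h =>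
          haP (pconv 0 p0 _ (aux_labs_mem P.2.1 h) _ hlow inf_le_left)
        have ha₂P : a₂ ∉ P.1 := fun h =>
          haP (pconv 0 p0 _ (aux_labs_mem P.2.1 h) _ hlow inf_le_right)
        have hb₁P : b₁ ∈ P.1 :=
          aux_mem_of_labs_mem P.2.1
            (pconv 0 p0 _ hbP _ (aux_labs_nonneg _) le_sup_left)
        have hb₂P : b₂ ∈ P.1 :=
          aux_mem_of_labs_mem P.2.1
            (pconv 0 p0 _ hbP _ (aux_labs_nonneg _) le_sup_right)
        exact ⟨h1 P ha₁P hb₁P, h2 P ha₂P hb₂P⟩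
  | sUnion S _ ih =>
      intro hmem
      obtain ⟨t, ht, hQt⟩ := hmem
      obtain ⟨a, b, ha, hb, h⟩ := ih t ht hQt
      exact ⟨a, b, ha, hb, fun P hp hbp => ⟨t, ht, h P hp hbp⟩⟩

end Aux

/-- for an abelian ℓ-group `G`, a set `𝓟` of primes with
`⋂𝓟 = {0}`, and a prime `Q`: `Q` is a `𝓟`-element iff `⋂ V_𝓟(q) ⊆ Q` for all
`q ∈ Q` iff `Q` lies in the patch closure of `𝓟` in `Spec(G)`. -/
theorem stmt_18 {G : Type*} [Lattice G] [AddCommGroup G]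
    [CovariantClass G G (· + ·) (· ≤ ·)]
    [CovariantClass G G (Function.swap (· + ·)) (· ≤ ·)]
    (PP : Set (Set G)) (hPP : ∀ P ∈ PP, IsPrimeSubgroup P) (hne : PP.Nonempty)
    (hint : ⋂₀ PP = {(0 : G)}) (Q : Set G) (hQ : IsPrimeSubgroup Q) :
    ((∀ h ∈ Q, ∀ g : G, {P ∈ PP | h ∈ P} ⊆ {P ∈ PP | g ∈ P} → g ∈ Q) ↔
      (∀ q ∈ Q, ⋂₀ {P ∈ PP | q ∈ P} ⊆ Q)) ∧
    ((∀ h ∈ Q, ∀ g : G, {P ∈ PP | h ∈ P} ⊆ {P ∈ PP | g ∈ P} → g ∈ Q) ↔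
      (⟨Q, hQ⟩ : SpecType G) ∈ @closure _ (patchTop G) {P : SpecType G | P.1 ∈ PP}) := by
  letI : TopologicalSpace (SpecType G) := patchTop G
  constructor
  · constructor
    · intro hi q hq g hg
      exact hi q hq g fun P hP => ⟨hP.1, Set.mem_sInter.mp hg P hP⟩
    · intro hii h hh g hg
      exact hii h hh (Set.mem_sInter.mpr fun P hP => (hg hP).2)
  · constructor
    · intro hi
      rw [mem_closure_iff]
      intro o ho hQo
      obtain ⟨a, b, ha, hb, h⟩ := aux_key Q hQ ho hQo
      by_contra hemp
      have hsub : {P ∈ PP | b ∈ P} ⊆ {P ∈ PP | a ∈ P} := by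
        rintro P' ⟨hP', hbP'⟩
        by_contra haP'
        have hnotin : a ∉ P' := fun hx => haP' ⟨hP', hx⟩
        exact hemp ⟨⟨P', hPP P' hP'⟩, h _ hnotin hbP', hP'⟩
      exact ha (hi b hb a hsub)
    · intro hc h hh g hg
      by_contra hgQ
      have hopen : IsOpen (Uset g ∩ Vset h) :=
        TopologicalSpace.GenerateOpen.inter _ _
          (.basic _ (Or.inl ⟨g, rfl⟩)) (.basic _ (Or.inr ⟨h, rfl⟩))
      obtain ⟨P, ⟨hgP, hhP⟩, hPmem⟩ :=
        mem_closure_iff.mp hc _ hopen ⟨hgQ, hh⟩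
      exact hgP (hg ⟨hPmem, hhP⟩).2
end
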